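/- arXiv:2004.09163 — 4 statements merged into one kernel-verified Lean document; each statement's English description precedes it below -/
import Mathlib

section
/- Let d, c ∈ ℚ with 0 ≤ c < d, let k ∈ ℕ, and set x := ⌈2d/(d−c)⌉ + 1. For p ∈ ℕ define arrival(p) := (2^k − 1)·x + 2p and cost(p) := (2^k − 1)·d·x + p·(2d − x·(d − c)). Then for all p_1, p_2 with 0 ≤ p_1 < p_2 < 2^k one has arrival(p_1) < arrival(p_2) and cost(p_1) > cost(p_2). -/
/-- Let `0 ≤ c < d` be rationals, `k ∈ ℕ`, and
`x := ⌈2d/(d−c)⌉ + 1`.  With `arrival p := (2^k − 1)·x + 2p` and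
`cost p := (2^k − 1)·d·x + p·(2d − x·(d − c))`, for all `p₁ < p₂ < 2^k`
we have `arrival p₁ < arrival p₂` and `cost p₁ > cost p₂`. -/
theorem stmt_2 (d c : ℚ) (hc : 0 ≤ c) (hcd : c < d) (k : ℕ)
    (x : ℚ) (hx : x = (⌈2 * d / (d - c)⌉ : ℚ) + 1)
    (arrival cost : ℕ → ℚ)
    (harrival : ∀ p : ℕ, arrival p = (2 ^ k - 1) * x + 2 * p)
    (hcost : ∀ p : ℕ, cost p = (2 ^ k - 1) * d * x + p * (2 * d - x * (d - c)))
    (p₁ p₂ : ℕ) (h₁₂ : p₁ < p₂) (h₂ : p₂ < 2 ^ k) :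
    arrival p₁ < arrival p₂ ∧ cost p₂ < cost p₁ := by
  have hdc : (0 : ℚ) < d - c := by linarith
  have hp : (p₁ : ℚ) < (p₂ : ℚ) := by exact_mod_cast h₁₂
  have hxgt : 2 * d / (d - c) < x := by
    rw [hx]
    have := Int.le_ceil (2 * d / (d - c))
    linarith
  have hneg : 2 * d - x * (d - c) < 0 := by
    have : 2 * d < x * (d - c) := by
      rw [div_lt_iff₀ hdc] at hxgt
      linarith
    linarith
  constructor
  · rw [harrival, harrival]
    linarith
  · rw [hcost, hcost]
    nlinarith
end

section
/- Let d, c ∈ ℚ with 0 ≤ c < d, let k ∈ ℕ, and set x := ⌈2d/(d−c)⌉ + 1. For p ∈ ℕ define arrival(p) := (2^k − 1)·x + 2p and cost(p) := (2^k − 1)·d·x + p·(2d − x·(d − c)). Then the map p ↦ (arrival(p), cost(p)) is injective on {0, …, 2^k − 1}, and its image is an antichain of size 2^k in ℚ × ℚ with the componentwise (product) order; that is, the 2^k time-cost pairs are pairwise Pareto-incomparable. -/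
/-- Let `0 ≤ c < d` be rationals, `k ∈ ℕ`, and
`x := ⌈2d/(d−c)⌉ + 1`.  With `arrival p := (2^k − 1)·x + 2p` and
`cost p := (2^k − 1)·d·x + p·(2d − x·(d − c))`, the map
`p ↦ (arrival p, cost p)` is injective on `{0, …, 2^k − 1}` and its image is
an antichain of size `2^k` in `ℚ × ℚ` with the componentwise order
(i.e. the `2^k` time-cost pairs are pairwise Pareto-incomparable). -/
theorem stmt_4 (d c : ℚ) (hc : 0 ≤ c) (hcd : c < d) (k : ℕ)
    (x : ℚ) (hx : x = (⌈2 * d / (d - c)⌉ : ℚ) + 1)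
    (f : ℕ → ℚ × ℚ)
    (hf : ∀ p : ℕ, f p =
      ((2 ^ k - 1) * x + 2 * p, (2 ^ k - 1) * d * x + p * (2 * d - x * (d - c)))) :
    Set.InjOn f {p : ℕ | p < 2 ^ k} ∧
    IsAntichain (· ≤ ·) (f '' {p : ℕ | p < 2 ^ k}) ∧
    (f '' {p : ℕ | p < 2 ^ k}).ncard = 2 ^ k := by
  have hdc : (0:ℚ) < d - c := by linarith
  have hxgt : 2 * d / (d - c) < x := by
    rw [hx]; have := Int.le_ceil (2 * d / (d - c)); linarith
  have hneg : 2 * d - x * (d - c) < 0 := by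
    have h1 : 2 * d / (d - c) * (d - c) < x * (d - c) :=
      mul_lt_mul_of_pos_right hxgt hdc
    rw [div_mul_cancel₀ _ (ne_of_gt hdc)] at h1
    linarith
  have hinj : Set.InjOn f {p : ℕ | p < 2 ^ k} := by
    intro p _ q _ h
    rw [hf p, hf q] at h
    have h1 := congrArg Prod.fst h
    simp only at h1
    have : (p:ℚ) = q := by linarith
    exact_mod_cast this
  refine ⟨hinj, ?_, ?_⟩
  · rintro a ⟨p, _, rfl⟩ b ⟨q, _, rfl⟩ hne hle
    have hpq : p ≠ q := fun h => hne (by rw [h])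
    rw [hf p, hf q] at hle
    obtain ⟨h1, h2⟩ := hle
    simp only at h1 h2
    rcases lt_or_gt_of_ne hpq with h | h
    · have hq : (p:ℚ) < q := by exact_mod_cast h
      have : (q:ℚ) * (2 * d - x * (d - c)) < p * (2 * d - x * (d - c)) := by
        apply mul_lt_mul_of_neg_right hq hneg
      linarith
    · have hq : (q:ℚ) < p := by exact_mod_cast h
      linarith
  · rw [Set.ncard_image_of_injOn hinj]
    have : {p : ℕ | p < 2 ^ k} = ↑(Finset.range (2 ^ k)) := by
      ext p; simp
    rw [this, Set.ncard_coe_finset, Finset.card_range]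
end

section
/- Let B ⊆ ℤ be a finite set, δ ∈ ℕ, and t ∈ ℤ, and suppose there exists p ∈ ℕ such that t − p is a feasible departure for arrival time t. Let 𝒯(t) be the least such p. Then for every integer s ≤ t, s is a feasible departure for arrival time t if and only if s ≤ t − 𝒯(t); that is, t − 𝒯(t) is the latest departure time in order not to arrive later than at time t. -/
/-- For a finite set `B ⊆ ℤ` of closed time points and a driving time `δ ∈ ℕ`,
a departure time `s ≤ t` is feasible for arrival time `t` if the number of
integers in `[s, t)` not belonging to `B` is at least `δ`. -/
def FeasibleDep (B : Finset ℤ) (δ : ℕ) (t s : ℤ) : Prop :=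
  s ≤ t ∧ δ ≤ ((Finset.Ico s t).filter (fun z => z ∉ B)).card

/-- Suppose some `t − p` (with `p ∈ ℕ`) is a feasible
departure for arrival time `t`, and let `T = 𝒯(t)` be the least such `p`.
Then for every integer `s ≤ t`, `s` is a feasible departure for arrival
time `t` iff `s ≤ t − T`; i.e. `t − 𝒯(t)` is the latest feasible departure
time in order not to arrive later than at time `t`. -/
theorem stmt_7 (B : Finset ℤ) (δ : ℕ) (t : ℤ) (T : ℕ)
    (hT : IsLeast {p : ℕ | FeasibleDep B δ t (t - p)} T) :
    ∀ s : ℤ, s ≤ t → (FeasibleDep B δ t s ↔ s ≤ t - T) := by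
  intro s hs
  constructor
  · rintro ⟨-, hcard⟩
    have hp : FeasibleDep B δ t (t - ((t - s).toNat : ℤ)) := by
      rw [Int.toNat_of_nonneg (by omega)]
      refine ⟨by omega, ?_⟩; convert hcard using 4; omega
    have := hT.2 hp
    omega
  · intro hle
    obtain ⟨-, hcard⟩ := hT.1
    refine ⟨hs, le_trans hcard ?_⟩
    exact Finset.card_le_card (Finset.filter_subset_filter _
      (Finset.Ico_subset_Ico (by omega) le_rfl))
end

section
/- Let B ⊆ ℤ be a finite set and δ ∈ ℕ. If t_1 ≤ t_2 are integers such that the shortest travel time 𝒯 is defined at both t_1 and t_2, then t_1 − 𝒯(t_1) ≤ t_2 − 𝒯(t_2); that is, the latest feasible departure time is a nondecreasing function of the arrival time (the FIFO property: one cannot arrive earlier by departing later). -/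
/-- **FIFO property.** If `t₁ ≤ t₂` and the shortest travel
time `𝒯` (least `p ∈ ℕ` with `t − p` a feasible departure for arrival `t`)
is defined at both `t₁` and `t₂`, then `t₁ − 𝒯(t₁) ≤ t₂ − 𝒯(t₂)`:
the latest feasible departure time is nondecreasing in the arrival time. -/
theorem stmt_9 (B : Finset ℤ) (δ : ℕ) (t₁ t₂ : ℤ) (h : t₁ ≤ t₂) (T₁ T₂ : ℕ)
    (h₁ : IsLeast {p : ℕ | FeasibleDep B δ t₁ (t₁ - p)} T₁)
    (h₂ : IsLeast {p : ℕ | FeasibleDep B δ t₂ (t₂ - p)} T₂) :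
    t₁ - T₁ ≤ t₂ - T₂ := by
  obtain ⟨⟨hle1, hcard1⟩, _⟩ := h₁
  obtain ⟨_, hmin2⟩ := h₂
  set s₁ : ℤ := t₁ - (T₁ : ℤ) with hs₁
  have hp : (0:ℤ) ≤ t₂ - s₁ := by linarith
  have hfeas : ((t₂ - s₁).toNat) ∈ {p : ℕ | FeasibleDep B δ t₂ (t₂ - p)} := by
    have hc : ((t₂ - s₁).toNat : ℤ) = t₂ - s₁ := Int.toNat_of_nonneg hp
    have he : t₂ - ((t₂ - s₁).toNat : ℤ) = s₁ := by rw [hc]; ring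
    refine ⟨by rw [he]; linarith, ?_⟩
    rw [he]
    refine le_trans hcard1 (Finset.card_le_card ?_)
    exact Finset.filter_subset_filter _ (Finset.Ico_subset_Ico_right h)
  have hT₂ : T₂ ≤ (t₂ - s₁).toNat := hmin2 hfeas
  have : (T₂ : ℤ) ≤ t₂ - s₁ := by
    have := Int.ofNat_le.mpr hT₂
    rwa [Int.toNat_of_nonneg hp] at this
  linarith
end
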